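/- arXiv:math/0503416 — 6 statements merged into one kernel-verified Lean document; each statement's English description precedes it below -/
import Mathlib

section
/- For a monotone poset map φ : P → P, the map α defined by α(x) = φ(x) if φ(x) > x and α(x) = x otherwise, is order-preserving (and hence an increasing map). -/
/-- A map `φ : P → P` on a poset is a *monotone poset map* if it is
order-preserving and for every `x`, either `x ≤ φ x` or `φ x ≤ x`. -/
def IsMonotonePosetMap {P : Type*} [PartialOrder P] (φ : P → P) : Prop :=
  Monotone φ ∧ ∀ x : P, x ≤ φ x ∨ φ x ≤ x

open scoped Classical in
/-- For a monotone poset map `φ`, the map `α` with `α x = φ x` if `φ x > x` and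
`α x = x` otherwise is order-preserving, hence an increasing map. -/
theorem alpha_is_increasing {P : Type*} [PartialOrder P] (φ : P → P)
    (h : IsMonotonePosetMap φ) :
    Monotone (fun x : P => if x < φ x then φ x else x) ∧
    ∀ x : P, x ≤ (fun x : P => if x < φ x then φ x else x) x := by
  obtain ⟨hm, hc⟩ := h
  constructor
  · intro x y hxy
    simp only
    by_cases hx : x < φ x <;> by_cases hy : y < φ y <;> simp [hx, hy]
    · exact hm hxy
    · have : φ y ≤ y := by
        rcases hc y with h1 | h1
        · exact (lt_or_eq_of_le h1).elim (fun h2 => absurd h2 hy) (fun h2 => h2.ge)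
        · exact h1
      exact le_trans (hm hxy) this
    · exact le_trans hxy hy.le
    · exact hxy
  · intro x
    by_cases hx : x < φ x <;> simp [hx]
    exact hx.le
end

section
/- For a monotone poset map φ : P → P, the map β defined by β(x) = φ(x) if φ(x) < x and β(x) = x otherwise, is order-preserving (and hence a decreasing map). -/
open scoped Classical in
/-- For a monotone poset map `φ`, the map `β` with `β x = φ x` if `φ x < x` and
`β x = x` otherwise is order-preserving, hence a decreasing map. -/
theorem beta_is_decreasing {P : Type*} [PartialOrder P] (φ : P → P)
    (h : IsMonotonePosetMap φ) :
    Monotone (fun x : P => if φ x < x then φ x else x) ∧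
    ∀ x : P, (fun x : P => if φ x < x then φ x else x) x ≤ x := by
  obtain ⟨hmono, hcomp⟩ := h
  constructor
  · intro x y hxy
    simp only
    by_cases hx : φ x < x <;> by_cases hy : φ y < y <;> simp [hx, hy]
    · exact hmono hxy
    · exact le_trans hx.le hxy
    · have hxφ : x ≤ φ x := by
        rcases hcomp x with h1 | h1
        · exact h1
        · exact (h1.lt_or_eq.resolve_left hx).ge
      exact le_trans hxφ (hmono hxy)
    · exact hxy
  · intro x
    simp only
    by_cases hx : φ x < x
    · simp [hx, hx.le]
    · simp [hx]
end

section
/- If X is a nonevasive finite simplicial complex and Y is any finite nonempty simplicial complex, then the join X * Y is nonevasive. -/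
/-- An abstract simplicial complex on a vertex type `V`: a collection of
nonempty finite subsets of `V` closed under passing to nonempty subsets. -/
structure SComplex (V : Type*) where
  faces : Set (Finset V)
  nonempty_of_mem : ∀ σ ∈ faces, σ.Nonempty
  down_closed : ∀ σ ∈ faces, ∀ τ ⊆ σ, τ.Nonempty → τ ∈ faces

namespace SComplex

variable {V W : Type*}

/-- Deletion of a vertex: all faces not containing `v`. -/
def del (X : SComplex V) (v : V) : SComplex V where
  faces := {σ ∈ X.faces | v ∉ σ}
  nonempty_of_mem := fun σ h => X.nonempty_of_mem σ h.1
  down_closed := fun σ h τ hτ hne =>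
    ⟨X.down_closed σ h.1 τ hτ hne, fun hv => h.2 (hτ hv)⟩

/-- The link of a vertex `v`: faces `σ` avoiding `v` with `σ ∪ {v}` a face. -/
def link [DecidableEq V] (X : SComplex V) (v : V) : SComplex V where
  faces := {σ | v ∉ σ ∧ σ.Nonempty ∧ insert v σ ∈ X.faces}
  nonempty_of_mem := fun _ h => h.2.1
  down_closed := fun σ h τ hτ hne =>
    ⟨fun hv => h.1 (hτ hv), hne,
      X.down_closed _ h.2.2 _ (Finset.insert_subset_insert v hτ)
        ⟨v, Finset.mem_insert_self v _⟩⟩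

/-- The one-point complex on the vertex `v`. -/
def point (v : V) : SComplex V where
  faces := {{v}}
  nonempty_of_mem := fun σ h => by
    simp only [Set.mem_singleton_iff] at h; subst h; exact Finset.singleton_nonempty v
  down_closed := fun σ h τ hτ hne => by
    simp only [Set.mem_singleton_iff] at h ⊢
    subst h
    exact Finset.Subset.antisymm hτ
      (Finset.singleton_subset_iff.2 (by
        obtain ⟨x, hx⟩ := hne
        have := Finset.mem_singleton.1 (hτ hx)
        subst this; exact hx))

/-- Nonevasiveness, defined recursively: a point is nonevasive, and `X` is
nonevasive if some vertex `v` has both the deletion `X \ {v}` and the link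
`lk_X v` nonevasive. -/
inductive Nonevasive [DecidableEq V] : SComplex V → Prop where
  | point (X : SComplex V) (v : V) (h : X.faces = {({v} : Finset V)}) : Nonevasive X
  | step (X : SComplex V) (v : V) (hv : ({v} : Finset V) ∈ X.faces)
      (hdel : Nonevasive (X.del v)) (hlink : Nonevasive (X.link v)) : Nonevasive X

/-- `NERed X Y` (`X ↘_NE Y`): `Y` is obtained from `X` by successively deleting
vertices whose links are nonevasive. -/
inductive NERed [DecidableEq V] : SComplex V → SComplex V → Prop where
  | refl (X : SComplex V) : NERed X X
  | step (X Y : SComplex V) (v : V) (hv : ({v} : Finset V) ∈ X.faces)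
      (hlink : Nonevasive (X.link v)) (h : NERed (X.del v) Y) : NERed X Y

/-- An elementary collapse: removal of a free pair `τ ⊂ σ` with
`dim σ = dim τ + 1` and `σ` the unique face properly containing `τ`. -/
def IsElemCollapse (X Y : SComplex V) : Prop :=
  ∃ σ τ : Finset V, σ ∈ X.faces ∧ τ ∈ X.faces ∧ τ ⊂ σ ∧ σ.card = τ.card + 1 ∧
    (∀ ρ ∈ X.faces, τ ⊂ ρ → ρ = σ) ∧ Y.faces = X.faces \ {σ, τ}

/-- `Collapses X Y`: `X` collapses onto `Y` by a sequence of elementary collapses. -/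
inductive Collapses : SComplex V → SComplex V → Prop where
  | refl (X : SComplex V) : Collapses X X
  | step (X Z Y : SComplex V) (h : IsElemCollapse X Z) (h' : Collapses Z Y) :
      Collapses X Y

/-- The simplicial join of two complexes. -/
def join [DecidableEq V] [DecidableEq W] (X : SComplex V) (Y : SComplex W) :
    SComplex (V ⊕ W) where
  faces := {ρ | ρ.Nonempty ∧ ∃ (σ : Finset V) (τ : Finset W),
      (σ ∈ X.faces ∨ σ = ∅) ∧ (τ ∈ Y.faces ∨ τ = ∅) ∧
      ρ = σ.image Sum.inl ∪ τ.image Sum.inr}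
  nonempty_of_mem := fun _ h => h.1
  down_closed := by
    rintro ρ ⟨-, σ, τ, hσ, hτ, rfl⟩ ρ' hsub hne
    classical
    refine ⟨hne, σ.filter (fun a => Sum.inl a ∈ ρ'), τ.filter (fun b => Sum.inr b ∈ ρ'),
      ?_, ?_, ?_⟩
    · rcases (σ.filter (fun a => Sum.inl a ∈ ρ')).eq_empty_or_nonempty with h | h
      · exact Or.inr h
      · rcases hσ with hσ | rfl
        · exact Or.inl (X.down_closed σ hσ _ (Finset.filter_subset _ _) h)
        · simp at h
    · rcases (τ.filter (fun b => Sum.inr b ∈ ρ')).eq_empty_or_nonempty with h | h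
      · exact Or.inr h
      · rcases hτ with hτ | rfl
        · exact Or.inl (Y.down_closed τ hτ _ (Finset.filter_subset _ _) h)
        · simp at h
    · ext z
      cases z with
      | inl a =>
        constructor
        · intro hz
          have := hsub hz
          simp only [Finset.mem_union, Finset.mem_image] at this ⊢
          refine Or.inl ⟨a, ?_, rfl⟩
          simp only [Finset.mem_filter]
          rcases this with ⟨a', ha', he⟩ | ⟨b', _, he⟩
          · cases he; exact ⟨ha', hz⟩
          · cases he
        · intro hz
          simp only [Finset.mem_union, Finset.mem_image, Finset.mem_filter] at hz
          rcases hz with ⟨a', ⟨_, hmem⟩, he⟩ | ⟨b', _, he⟩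
          · cases he; exact hmem
          · cases he
      | inr b =>
        constructor
        · intro hz
          have := hsub hz
          simp only [Finset.mem_union, Finset.mem_image] at this ⊢
          refine Or.inr ⟨b, ?_, rfl⟩
          simp only [Finset.mem_filter]
          rcases this with ⟨a', _, he⟩ | ⟨b', hb', he⟩
          · cases he
          · cases he; exact ⟨hb', hz⟩
        · intro hz
          simp only [Finset.mem_union, Finset.mem_image, Finset.mem_filter] at hz
          rcases hz with ⟨a', _, he⟩ | ⟨b', ⟨_, hmem⟩, he⟩
          · cases he
          · cases he; exact hmem

end SComplex

/-- The order complex of a subset `Q` of a poset `P`: simplices are the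
nonempty finite chains contained in `Q`. -/
def orderComplexOn (P : Type*) [PartialOrder P] (Q : Set P) : SComplex P where
  faces := {σ | σ.Nonempty ∧ (∀ x ∈ σ, x ∈ Q) ∧ ∀ x ∈ σ, ∀ y ∈ σ, x ≤ y ∨ y ≤ x}
  nonempty_of_mem := fun _ h => h.1
  down_closed := fun σ h τ hτ hne =>
    ⟨hne, fun x hx => h.2.1 x (hτ hx), fun x hx y hy => h.2.2 x (hτ hx) y (hτ hy)⟩

namespace NEJoinAux

open SComplex

variable {V W : Type*} [DecidableEq V] [DecidableEq W]

lemma ext' {X Y : SComplex V} (h : X.faces = Y.faces) : X = Y := by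
  cases X; cases Y; simpa using h

lemma join_del_inl (X : SComplex V) (Y : SComplex W) (v : V) :
    (X.join Y).del (Sum.inl v) = (X.del v).join Y := by
  apply ext'; ext ρ
  constructor
  · rintro ⟨⟨hne, σ, τ, hσ, hτ, rfl⟩, hv⟩
    refine ⟨hne, σ, τ, ?_, hτ, rfl⟩
    have hvσ : v ∉ σ := fun h =>
      hv (Finset.mem_union_left _ (Finset.mem_image_of_mem _ h))
    rcases hσ with h | h
    · exact Or.inl ⟨h, hvσ⟩
    · exact Or.inr h
  · rintro ⟨hne, σ, τ, hσ, hτ, rfl⟩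
    have hvσ : v ∉ σ := by
      rcases hσ with h | rfl
      exacts [h.2, Finset.notMem_empty v]
    refine ⟨⟨hne, σ, τ, ?_, hτ, rfl⟩, ?_⟩
    · rcases hσ with h | h
      exacts [Or.inl h.1, Or.inr h]
    · intro h
      simp only [Finset.mem_union, Finset.mem_image] at h
      rcases h with ⟨a, ha, he⟩ | ⟨b, hb, he⟩
      · cases he; exact hvσ ha
      · cases he

lemma join_del_inr (X : SComplex V) (Y : SComplex W) (w : W) :
    (X.join Y).del (Sum.inr w) = X.join (Y.del w) := by
  apply ext'; ext ρ
  constructor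
  · rintro ⟨⟨hne, σ, τ, hσ, hτ, rfl⟩, hv⟩
    refine ⟨hne, σ, τ, hσ, ?_, rfl⟩
    have hwτ : w ∉ τ := fun h =>
      hv (Finset.mem_union_right _ (Finset.mem_image_of_mem _ h))
    rcases hτ with h | h
    · exact Or.inl ⟨h, hwτ⟩
    · exact Or.inr h
  · rintro ⟨hne, σ, τ, hσ, hτ, rfl⟩
    have hwτ : w ∉ τ := by
      rcases hτ with h | rfl
      exacts [h.2, Finset.notMem_empty w]
    refine ⟨⟨hne, σ, τ, hσ, ?_, rfl⟩, ?_⟩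
    · rcases hτ with h | h
      exacts [Or.inl h.1, Or.inr h]
    · intro h
      simp only [Finset.mem_union, Finset.mem_image] at h
      rcases h with ⟨a, ha, he⟩ | ⟨b, hb, he⟩
      · cases he
      · cases he; exact hwτ hb

lemma join_link_inl {X : SComplex V} (Y : SComplex W) {v : V}
    (hv : ({v} : Finset V) ∈ X.faces) :
    (X.join Y).link (Sum.inl v) = (X.link v).join Y := by
  apply ext'; ext ρ
  constructor
  · rintro ⟨hvρ, hne, -, σ, τ, hσ, hτ, heq⟩
    have hvσ : v ∈ σ := by
      have h : Sum.inl v ∈ insert (Sum.inl v) ρ := Finset.mem_insert_self _ _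
      rw [heq] at h
      simp only [Finset.mem_union, Finset.mem_image] at h
      rcases h with ⟨a, ha, he⟩ | ⟨b, hb, he⟩
      · cases he; exact ha
      · cases he
    have hσX : σ ∈ X.faces := by
      rcases hσ with h | rfl
      · exact h
      · simp at hvσ
    refine ⟨hne, σ.erase v, τ, ?_, hτ, ?_⟩
    · rcases (σ.erase v).eq_empty_or_nonempty with h | h
      · exact Or.inr h
      · exact Or.inl ⟨Finset.notMem_erase _ _, h,
          by rw [Finset.insert_erase hvσ]; exact hσX⟩
    · have h2 : ρ = (insert (Sum.inl v) ρ).erase (Sum.inl v) :=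
        (Finset.erase_insert hvρ).symm
      rw [h2, heq, Finset.erase_union_distrib,
        ← Finset.image_erase Sum.inl_injective,
        Finset.erase_eq_of_notMem (s := Finset.image Sum.inr τ) (by simp)]
  · rintro ⟨hne, σ, τ, hσ, hτ, rfl⟩
    have hvσ : v ∉ σ := by
      rcases hσ with h | rfl
      exacts [h.1, Finset.notMem_empty v]
    have hins : insert v σ ∈ X.faces := by
      rcases hσ with h | rfl
      · exact h.2.2
      · simpa using hv
    refine ⟨?_, hne, Finset.insert_nonempty _ _, insert v σ, τ, Or.inl hins, hτ, ?_⟩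
    · intro h
      simp only [Finset.mem_union, Finset.mem_image] at h
      rcases h with ⟨a, ha, he⟩ | ⟨b, hb, he⟩
      · cases he; exact hvσ ha
      · cases he
    · rw [Finset.image_insert, Finset.insert_union]

lemma join_link_inr (X : SComplex V) {Y : SComplex W} {w : W}
    (hw : ({w} : Finset W) ∈ Y.faces) :
    (X.join Y).link (Sum.inr w) = X.join (Y.link w) := by
  apply ext'; ext ρ
  constructor
  · rintro ⟨hwρ, hne, -, σ, τ, hσ, hτ, heq⟩
    have hwτ : w ∈ τ := by
      have h : Sum.inr w ∈ insert (Sum.inr w) ρ := Finset.mem_insert_self _ _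
      rw [heq] at h
      simp only [Finset.mem_union, Finset.mem_image] at h
      rcases h with ⟨a, ha, he⟩ | ⟨b, hb, he⟩
      · cases he
      · cases he; exact hb
    have hτY : τ ∈ Y.faces := by
      rcases hτ with h | rfl
      · exact h
      · simp at hwτ
    refine ⟨hne, σ, τ.erase w, hσ, ?_, ?_⟩
    · rcases (τ.erase w).eq_empty_or_nonempty with h | h
      · exact Or.inr h
      · exact Or.inl ⟨Finset.notMem_erase _ _, h,
          by rw [Finset.insert_erase hwτ]; exact hτY⟩
    · have h2 : ρ = (insert (Sum.inr w) ρ).erase (Sum.inr w) :=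
        (Finset.erase_insert hwρ).symm
      rw [h2, heq, Finset.erase_union_distrib,
        ← Finset.image_erase Sum.inr_injective,
        Finset.erase_eq_of_notMem (s := Finset.image Sum.inl σ) (by simp)]
  · rintro ⟨hne, σ, τ, hσ, hτ, rfl⟩
    have hwτ : w ∉ τ := by
      rcases hτ with h | rfl
      exacts [h.1, Finset.notMem_empty w]
    have hins : insert w τ ∈ Y.faces := by
      rcases hτ with h | rfl
      · exact h.2.2
      · simpa using hw
    refine ⟨?_, hne, Finset.insert_nonempty _ _, σ, insert w τ, hσ, Or.inl hins, ?_⟩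
    · intro h
      simp only [Finset.mem_union, Finset.mem_image] at h
      rcases h with ⟨a, ha, he⟩ | ⟨b, hb, he⟩
      · cases he
      · cases he; exact hwτ hb
    · rw [Finset.image_insert, Finset.union_insert]

lemma join_point_empty {X : SComplex V} {Y : SComplex W} {v : V}
    (hX : X.faces = {({v} : Finset V)}) (hY : Y.faces = ∅) :
    (X.join Y).faces = {({Sum.inl v} : Finset (V ⊕ W))} := by
  ext ρ
  constructor
  · rintro ⟨hne, σ, τ, hσ, hτ, rfl⟩
    have hτe : τ = ∅ := by
      rcases hτ with h | rfl
      · rw [hY] at h; exact absurd h (Set.notMem_empty _)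
      · rfl
    have hσv : σ = {v} := by
      rcases hσ with h | rfl
      · rw [hX] at h; exact h
      · subst hτe; simp at hne
    subst hτe hσv
    simp
  · rintro rfl
    refine ⟨Finset.singleton_nonempty _, {v}, ∅, Or.inl (by rw [hX]; rfl),
      Or.inr rfl, by simp⟩

lemma cone_nonevasive (X : SComplex V) (v : V)
    (hX : X.faces = {({v} : Finset V)}) :
    ∀ n (Y : SComplex W) (hfin : Y.faces.Finite),
      hfin.toFinset.card ≤ n → Nonevasive (X.join Y) := by
  intro n
  induction n with
  | zero =>
    intro Y hfin hcard
    have hY : Y.faces = ∅ :=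
      Set.Finite.toFinset_eq_empty.mp (Finset.card_eq_zero.1 (Nat.le_zero.1 hcard))
    exact Nonevasive.point _ _ (join_point_empty hX hY)
  | succ n ih =>
    intro Y hfin hcard
    by_cases hY : Y.faces = ∅
    · exact Nonevasive.point _ _ (join_point_empty hX hY)
    · obtain ⟨σ0, hσ0⟩ := Set.nonempty_iff_ne_empty.2 hY
      obtain ⟨w, hwσ0⟩ := Y.nonempty_of_mem σ0 hσ0
      have hw : ({w} : Finset W) ∈ Y.faces :=
        Y.down_closed σ0 hσ0 _ (Finset.singleton_subset_iff.2 hwσ0)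
          (Finset.singleton_nonempty w)
      have hwF : ({w} : Finset W) ∈ hfin.toFinset := hfin.mem_toFinset.2 hw
      -- deletion
      have hdelfin : (Y.del w).faces.Finite :=
        hfin.subset (fun σ h => h.1)
      have hdelcard : hdelfin.toFinset.card ≤ n := by
        have hss : hdelfin.toFinset ⊂ hfin.toFinset := by
          rw [Set.Finite.toFinset_ssubset_toFinset]
          refine ⟨fun σ h => h.1, fun h => ?_⟩
          exact (h hw).2 (Finset.mem_singleton_self w)
        have := Finset.card_lt_card hss
        omega
      -- link
      have hlinkfin : (Y.link w).faces.Finite := by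
        refine (hfin.image (fun σ => σ.erase w)).subset ?_
        rintro σ ⟨hwσ, hne, hins⟩
        exact ⟨insert w σ, hins, by simp [Finset.erase_insert hwσ]⟩
      have hlinkcard : hlinkfin.toFinset.card ≤ n := by
        have hinj : Set.InjOn (insert w) (hlinkfin.toFinset : Set (Finset W)) := by
          intro σ1 h1 σ2 h2 he
          rw [Finset.mem_coe, hlinkfin.mem_toFinset] at h1 h2
          have e1 : σ1 = (insert w σ1).erase w := (Finset.erase_insert h1.1).symm
          have e2 : σ2 = (insert w σ2).erase w := (Finset.erase_insert h2.1).symm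
          rw [e1, e2, he]
        have hsub : hlinkfin.toFinset.image (insert w) ⊆ hfin.toFinset.erase {w} := by
          intro σ' hσ'
          obtain ⟨σ, hσ, rfl⟩ := Finset.mem_image.1 hσ'
          rw [hlinkfin.mem_toFinset] at hσ
          refine Finset.mem_erase.2 ⟨?_, hfin.mem_toFinset.2 hσ.2.2⟩
          intro h
          obtain ⟨x, hx⟩ := hσ.2.1
          have : x ∈ insert w σ := Finset.mem_insert_of_mem hx
          rw [h, Finset.mem_singleton] at this
          exact hσ.1 (this ▸ hx)
        have h1 : hlinkfin.toFinset.card = (hlinkfin.toFinset.image (insert w)).card :=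
          (Finset.card_image_of_injOn hinj).symm
        have h2 := Finset.card_le_card hsub
        have h3 := Finset.card_erase_lt_of_mem hwF
        omega
      refine Nonevasive.step _ (Sum.inr w) ?_ ?_ ?_
      · exact ⟨Finset.singleton_nonempty _, ∅, {w}, Or.inr rfl, Or.inl hw, by simp⟩
      · rw [join_del_inr]
        exact ih _ hdelfin hdelcard
      · rw [join_link_inr X hw]
        exact ih _ hlinkfin hlinkcard

end NEJoinAux

/-- If `X` is nonevasive and `Y` is a finite nonempty simplicial complex, then
the join `X * Y` is nonevasive. -/
theorem nonevasive_join {V W : Type*} [DecidableEq V] [DecidableEq W]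
    (X : SComplex V) (Y : SComplex W) (hX : SComplex.Nonevasive X)
    (hYfin : Y.faces.Finite) (hYne : Y.faces.Nonempty) :
    SComplex.Nonevasive (X.join Y) := by
  induction hX with
  | point X v h =>
    exact NEJoinAux.cone_nonevasive X v h _ Y hYfin le_rfl
  | step X v hv hdel hlink ihdel ihlink =>
    refine SComplex.Nonevasive.step _ (Sum.inl v)
      ⟨Finset.singleton_nonempty _, {v}, ∅, Or.inl hv, Or.inr rfl, by simp⟩ ?_ ?_
    · rw [NEJoinAux.join_del_inl]; exact ihdel
    · rw [NEJoinAux.join_link_inl Y hv]; exact ihlink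
end

section
/- If X₁, X₂, Y are finite simplicial complexes with X₁ NE-reducing to X₂, then X₁ * Y NE-reduces to X₂ * Y. -/
namespace SComplex

variable {V W : Type*}

lemma faces_ext {X Y : SComplex V} (h : X.faces = Y.faces) : X = Y := by
  cases X; cases Y; cases h; rfl

section joinlemmas

variable [DecidableEq V] [DecidableEq W]

lemma mem_inl_union {σ : Finset V} {τ : Finset W} {v : V} :
    Sum.inl v ∈ σ.image Sum.inl ∪ τ.image Sum.inr ↔ v ∈ σ := by simp

lemma mem_inr_union {σ : Finset V} {τ : Finset W} {w : W} :
    Sum.inr w ∈ σ.image Sum.inl ∪ τ.image Sum.inr ↔ w ∈ τ := by simp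

lemma singleton_inl_mem {X : SComplex V} {Y : SComplex W} {v : V}
    (hv : ({v} : Finset V) ∈ X.faces) :
    ({Sum.inl v} : Finset (V ⊕ W)) ∈ (X.join Y).faces := by
  exact ⟨Finset.singleton_nonempty _, {v}, ∅, Or.inl hv, Or.inr rfl, by simp⟩

lemma singleton_inr_mem {X : SComplex V} {Y : SComplex W} {w : W}
    (hw : ({w} : Finset W) ∈ Y.faces) :
    ({Sum.inr w} : Finset (V ⊕ W)) ∈ (X.join Y).faces := by
  exact ⟨Finset.singleton_nonempty _, ∅, {w}, Or.inr rfl, Or.inl hw, by simp⟩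

lemma join_del_inl (X : SComplex V) (Y : SComplex W) (v : V) :
    (X.join Y).del (Sum.inl v) = (X.del v).join Y := by
  apply faces_ext
  ext ρ
  constructor
  · rintro ⟨⟨hne, σ, τ, hσ, hτ, rfl⟩, hv⟩
    refine ⟨hne, σ, τ, ?_, hτ, rfl⟩
    rcases hσ with hσ | rfl
    · exact Or.inl ⟨hσ, fun hvs => hv (mem_inl_union.2 hvs)⟩
    · exact Or.inr rfl
  · rintro ⟨hne, σ, τ, hσ, hτ, rfl⟩
    refine ⟨⟨hne, σ, τ, ?_, hτ, rfl⟩, fun hv => ?_⟩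
    · rcases hσ with hσ | rfl
      · exact Or.inl hσ.1
      · exact Or.inr rfl
    · have hvs := mem_inl_union.1 hv
      rcases hσ with hσ | rfl
      · exact hσ.2 hvs
      · simp at hvs

lemma join_del_inr (X : SComplex V) (Y : SComplex W) (w : W) :
    (X.join Y).del (Sum.inr w) = X.join (Y.del w) := by
  apply faces_ext
  ext ρ
  constructor
  · rintro ⟨⟨hne, σ, τ, hσ, hτ, rfl⟩, hw⟩
    refine ⟨hne, σ, τ, hσ, ?_, rfl⟩
    rcases hτ with hτ | rfl
    · exact Or.inl ⟨hτ, fun hws => hw (mem_inr_union.2 hws)⟩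
    · exact Or.inr rfl
  · rintro ⟨hne, σ, τ, hσ, hτ, rfl⟩
    refine ⟨⟨hne, σ, τ, hσ, ?_, rfl⟩, fun hw => ?_⟩
    · rcases hτ with hτ | rfl
      · exact Or.inl hτ.1
      · exact Or.inr rfl
    · have hws := mem_inr_union.1 hw
      rcases hτ with hτ | rfl
      · exact hτ.2 hws
      · simp at hws

lemma insert_inl_union (σ : Finset V) (τ : Finset W) (v : V) :
    insert (Sum.inl v) (σ.image Sum.inl ∪ τ.image Sum.inr)
      = (insert v σ).image Sum.inl ∪ τ.image Sum.inr := by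
  rw [Finset.image_insert, Finset.insert_union]

lemma insert_inr_union (σ : Finset V) (τ : Finset W) (w : W) :
    insert (Sum.inr w) (σ.image Sum.inl ∪ τ.image Sum.inr)
      = σ.image Sum.inl ∪ (insert w τ).image Sum.inr := by
  rw [Finset.image_insert, Finset.union_insert]

lemma join_link_inl (X : SComplex V) (Y : SComplex W) (v : V)
    (hv : ({v} : Finset V) ∈ X.faces) :
    (X.join Y).link (Sum.inl v) = (X.link v).join Y := by
  apply faces_ext
  ext ρ
  constructor
  · rintro ⟨hvρ, hne, hins⟩
    obtain ⟨-, σ', τ', hσ', hτ', heq⟩ := hins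
    have hvσ' : v ∈ σ' := by
      have : Sum.inl v ∈ σ'.image Sum.inl ∪ τ'.image Sum.inr := by
        rw [← heq]; exact Finset.mem_insert_self _ _
      exact mem_inl_union.1 this
    have hσ'X : σ' ∈ X.faces := by
      rcases hσ' with h | rfl
      · exact h
      · simp at hvσ'
    have hρ : ρ = (σ'.erase v).image Sum.inl ∪ τ'.image Sum.inr := by
      have := congrArg (fun s => Finset.erase s (Sum.inl v)) heq
      rw [Finset.erase_insert hvρ] at this
      rw [this, Finset.erase_union_distrib,
        Finset.erase_eq_of_notMem (s := Finset.image Sum.inr τ') (by simp),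
        ← Finset.image_erase Sum.inl_injective]
    refine ⟨hne, σ'.erase v, τ', ?_, hτ', hρ⟩
    rcases (σ'.erase v).eq_empty_or_nonempty with h | h
    · exact Or.inr h
    · refine Or.inl ⟨Finset.notMem_erase _ _, h, ?_⟩
      rw [Finset.insert_erase hvσ']; exact hσ'X
  · rintro ⟨hne, σ, τ, hσ, hτ, rfl⟩
    have hvσ : v ∉ σ := by
      rcases hσ with h | rfl
      · exact h.1
      · simp
    refine ⟨fun h => hvσ (mem_inl_union.1 h), hne, ?_⟩
    refine ⟨?_, insert v σ, τ, ?_, hτ, insert_inl_union σ τ v⟩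
    · exact ⟨Sum.inl v, Finset.mem_insert_self _ _⟩
    · rcases hσ with h | rfl
      · exact Or.inl h.2.2
      · simpa using hv

lemma join_link_inr (X : SComplex V) (Y : SComplex W) (w : W)
    (hw : ({w} : Finset W) ∈ Y.faces) :
    (X.join Y).link (Sum.inr w) = X.join (Y.link w) := by
  apply faces_ext
  ext ρ
  constructor
  · rintro ⟨hwρ, hne, hins⟩
    obtain ⟨-, σ', τ', hσ', hτ', heq⟩ := hins
    have hwτ' : w ∈ τ' := by
      have : Sum.inr w ∈ σ'.image Sum.inl ∪ τ'.image Sum.inr := by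
        rw [← heq]; exact Finset.mem_insert_self _ _
      exact mem_inr_union.1 this
    have hτ'Y : τ' ∈ Y.faces := by
      rcases hτ' with h | rfl
      · exact h
      · simp at hwτ'
    have hρ : ρ = σ'.image Sum.inl ∪ (τ'.erase w).image Sum.inr := by
      have := congrArg (fun s => Finset.erase s (Sum.inr w)) heq
      rw [Finset.erase_insert hwρ] at this
      rw [this, Finset.erase_union_distrib,
        Finset.erase_eq_of_notMem (s := Finset.image Sum.inl σ') (by simp),
        ← Finset.image_erase Sum.inr_injective]
    refine ⟨hne, σ', τ'.erase w, hσ', ?_, hρ⟩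
    rcases (τ'.erase w).eq_empty_or_nonempty with h | h
    · exact Or.inr h
    · refine Or.inl ⟨Finset.notMem_erase _ _, h, ?_⟩
      rw [Finset.insert_erase hwτ']; exact hτ'Y
  · rintro ⟨hne, σ, τ, hσ, hτ, rfl⟩
    have hwτ : w ∉ τ := by
      rcases hτ with h | rfl
      · exact h.1
      · simp
    refine ⟨fun h => hwτ (mem_inr_union.1 h), hne, ?_⟩
    refine ⟨?_, σ, insert w τ, hσ, ?_, insert_inr_union σ τ w⟩
    · exact ⟨Sum.inr w, Finset.mem_insert_self _ _⟩
    · rcases hτ with h | rfl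
      · exact Or.inl h.2.2
      · simpa using hw

lemma del_faces_ssubset {Y : SComplex W} {w : W} (hw : ({w} : Finset W) ∈ Y.faces) :
    (Y.del w).faces ⊂ Y.faces := by
  constructor
  · exact fun σ h => h.1
  · intro hsub
    have := (hsub hw).2
    simp at this

lemma link_faces_ssubset {Y : SComplex W} {w : W} (hw : ({w} : Finset W) ∈ Y.faces) :
    (Y.link w).faces ⊂ Y.faces := by
  constructor
  · rintro σ ⟨hwσ, hne, hins⟩
    exact Y.down_closed _ hins σ (Finset.subset_insert _ _) hne
  · intro hsub
    have := (hsub hw).1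
    simp at this

/-- A cone (the join of a point with a finite complex) is nonevasive. -/
lemma cone_join_nonevasive [DecidableEq V] [DecidableEq W]
    (n : ℕ) (Y : SComplex W) (hYfin : Y.faces.Finite) (hn : Y.faces.ncard ≤ n)
    (X : SComplex V) (v : V) (hX : X.faces = {({v} : Finset V)}) :
    Nonevasive (X.join Y) := by
  induction n generalizing Y with
  | zero =>
    have hYe : Y.faces = ∅ := by
      rcases Set.eq_empty_or_nonempty Y.faces with h | h
      · exact h
      · exfalso
        have := Set.ncard_pos hYfin |>.2 h
        omega
    refine Nonevasive.point _ (Sum.inl v) ?_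
    ext ρ
    constructor
    · rintro ⟨hne, σ, τ, hσ, hτ, rfl⟩
      have hτe : τ = ∅ := by
        rcases hτ with h | rfl
        · rw [hYe] at h; exact absurd h (Set.notMem_empty _)
        · rfl
      subst hτe
      have hσv : σ = {v} := by
        rcases hσ with h | rfl
        · rw [hX] at h; exact h
        · simp at hne
      subst hσv
      simp
    · rintro rfl
      exact ⟨Finset.singleton_nonempty _, {v}, ∅, Or.inl (by rw [hX]; rfl),
        Or.inr rfl, by simp⟩
  | succ n ih =>
    rcases Set.eq_empty_or_nonempty Y.faces with hYe | ⟨ρ, hρ⟩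
    · -- same as base case
      refine Nonevasive.point _ (Sum.inl v) ?_
      ext ρ
      constructor
      · rintro ⟨hne, σ, τ, hσ, hτ, rfl⟩
        have hτe : τ = ∅ := by
          rcases hτ with h | rfl
          · rw [hYe] at h; exact absurd h (Set.notMem_empty _)
          · rfl
        subst hτe
        have hσv : σ = {v} := by
          rcases hσ with h | rfl
          · rw [hX] at h; exact h
          · simp at hne
        subst hσv
        simp
      · rintro rfl
        exact ⟨Finset.singleton_nonempty _, {v}, ∅, Or.inl (by rw [hX]; rfl),
          Or.inr rfl, by simp⟩
    · obtain ⟨w, hwρ⟩ := Y.nonempty_of_mem ρ hρ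
      have hw : ({w} : Finset W) ∈ Y.faces :=
        Y.down_closed ρ hρ {w} (Finset.singleton_subset_iff.2 hwρ)
          (Finset.singleton_nonempty _)
      refine Nonevasive.step _ (Sum.inr w) (singleton_inr_mem hw) ?_ ?_
      · rw [join_del_inr]
        have hss := del_faces_ssubset (Y := Y) hw
        refine ih (Y.del w) (hYfin.subset hss.1) ?_
        have := Set.ncard_lt_ncard hss hYfin
        omega
      · rw [join_link_inr X Y w hw]
        have hss := link_faces_ssubset (Y := Y) hw
        refine ih (Y.link w) (hYfin.subset hss.1) ?_
        have := Set.ncard_lt_ncard hss hYfin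
        omega

/-- The join of a nonevasive complex with a finite complex is nonevasive. -/
lemma nonevasive_join [DecidableEq V] [DecidableEq W]
    {X : SComplex V} (Y : SComplex W) (hX : Nonevasive X) (hYfin : Y.faces.Finite) :
    Nonevasive (X.join Y) := by
  induction hX with
  | point X v h =>
    exact cone_join_nonevasive Y.faces.ncard Y hYfin le_rfl X v h
  | step X v hv hdel hlink ihdel ihlink =>
    refine Nonevasive.step _ (Sum.inl v) (singleton_inl_mem hv) ?_ ?_
    · rw [join_del_inl]; exact ihdel
    · rw [join_link_inl X Y v hv]; exact ihlink

end joinlemmas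

end SComplex

/-- If `X₁` NE-reduces to `X₂`, then `X₁ * Y` NE-reduces to `X₂ * Y`. -/
theorem nered_join {V W : Type*} [DecidableEq V] [DecidableEq W]
    (X₁ X₂ : SComplex V) (Y : SComplex W)
    (hfin : X₁.faces.Finite) (hYfin : Y.faces.Finite)
    (h : SComplex.NERed X₁ X₂) :
    SComplex.NERed (X₁.join Y) (X₂.join Y) := by
  clear hfin
  induction h with
  | refl X => exact SComplex.NERed.refl _
  | step X X' v hv hlink hred ih =>
    refine SComplex.NERed.step _ _ (Sum.inl v) (SComplex.singleton_inl_mem hv) ?_ ?_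
    · rw [SComplex.join_link_inl X Y v hv]
      exact SComplex.nonevasive_join Y hlink hYfin
    · rw [SComplex.join_del_inl]
      exact ih
end

section
/- If a finite simplicial complex X NE-reduces to a subcomplex Y, then X collapses onto Y. -/
namespace SComplex

theorem ext' {V : Type*} {X Y : SComplex V} (h : X.faces = Y.faces) : X = Y := by
  cases X; cases Y; cases h; rfl

/-- Deletion of a face: all faces not containing `τ`. -/
def delF {V : Type*} [DecidableEq V] (X : SComplex V) (τ : Finset V) : SComplex V where
  faces := {σ ∈ X.faces | ¬ τ ⊆ σ}
  nonempty_of_mem := fun σ h => X.nonempty_of_mem σ h.1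
  down_closed := fun σ h μ hμ hne =>
    ⟨X.down_closed σ h.1 μ hμ hne, fun hc => h.2 (hc.trans hμ)⟩

/-- The link of a face `τ`. -/
def linkF {V : Type*} [DecidableEq V] (X : SComplex V) (τ : Finset V) : SComplex V where
  faces := {σ | Disjoint σ τ ∧ σ.Nonempty ∧ σ ∪ τ ∈ X.faces}
  nonempty_of_mem := fun _ h => h.2.1
  down_closed := fun σ h μ hμ hne =>
    ⟨Finset.disjoint_of_subset_left hμ h.1, hne,
      X.down_closed _ h.2.2 _ (Finset.union_subset_union_left hμ)
        ⟨hne.choose, Finset.mem_union_left _ hne.choose_spec⟩⟩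

theorem Collapses.trans' {V : Type*} {X Y Z : SComplex V}
    (h1 : Collapses X Y) (h2 : Collapses Y Z) : Collapses X Z := by
  induction h1 with
  | refl => exact h2
  | step A B C h h' ih => exact Collapses.step A B Z h (ih h2)

theorem key {V : Type*} [DecidableEq V] {L : SComplex V} (hL : L.Nonevasive) :
    ∀ (X : SComplex V) (τ : Finset V), τ ∈ X.faces → linkF X τ = L →
      Collapses X (delF X τ) := by
  induction hL with
  | point L w hw =>
    intro X τ hτ heq
    have hfaces : (linkF X τ).faces = {({w} : Finset V)} := by rw [heq, hw]
    have hwmem : ({w} : Finset V) ∈ (linkF X τ).faces := by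
      rw [hfaces]; rfl
    obtain ⟨hdisj, -, hunion⟩ := hwmem
    have hwτ : w ∉ τ := fun hc => (Finset.disjoint_singleton_left.1 hdisj) hc
    have hins : insert w τ ∈ X.faces := by
      rwa [Finset.insert_eq]
    have huniq : ∀ ρ ∈ X.faces, τ ⊂ ρ → ρ = insert w τ := by
      intro ρ hρ hss
      obtain ⟨x, hxρ, hxτ⟩ := Finset.exists_of_ssubset hss
      have hmem : ρ \ τ ∈ (linkF X τ).faces := by
        refine ⟨Finset.sdiff_disjoint, ⟨x, Finset.mem_sdiff.2 ⟨hxρ, hxτ⟩⟩, ?_⟩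
        rwa [Finset.sdiff_union_of_subset hss.subset]
      rw [hfaces, Set.mem_singleton_iff] at hmem
      have : ρ = ρ \ τ ∪ τ := (Finset.sdiff_union_of_subset hss.subset).symm
      rw [this, hmem, Finset.insert_eq]
    have hcol : IsElemCollapse X (delF X τ) := by
      refine ⟨insert w τ, τ, hins, hτ, Finset.ssubset_insert hwτ,
        Finset.card_insert_of_notMem hwτ, huniq, ?_⟩
      ext ρ
      simp only [delF, Set.mem_diff, Set.mem_insert_iff, Set.mem_singleton_iff,
        Set.mem_setOf_eq, Set.mem_sep_iff]
      constructor
      · rintro ⟨hρ, hnsub⟩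
        refine ⟨hρ, ?_⟩
        push_neg
        constructor
        · rintro rfl; exact hnsub (Finset.subset_insert w τ)
        · rintro rfl; exact hnsub Finset.Subset.rfl
      · rintro ⟨hρ, hn12⟩
        refine ⟨hρ, fun hsub => ?_⟩
        push_neg at hn12
        rcases eq_or_ne ρ τ with rfl | hne
        · exact hn12.2 rfl
        · exact hn12.1 (huniq ρ hρ (Finset.ssubset_iff_subset_ne.2 ⟨hsub, Ne.symm hne⟩))
    exact Collapses.step _ _ _ hcol (Collapses.refl _)
  | step L w hw hdel hlink ihdel ihlink =>
    intro X τ hτ heq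
    have hwmem : ({w} : Finset V) ∈ (linkF X τ).faces := by rw [heq]; exact hw
    obtain ⟨hdisj, -, hunion⟩ := hwmem
    have hwτ : w ∉ τ := fun hc => (Finset.disjoint_singleton_left.1 hdisj) hc
    have hins : insert w τ ∈ X.faces := by
      rwa [Finset.insert_eq]
    -- first collapse: remove all faces containing `insert w τ`
    have hlinkeq1 : linkF X (insert w τ) = L.link w := by
      apply ext'
      ext σ
      simp only [linkF, link, Set.mem_setOf_eq, ← heq]
      constructor
      · rintro ⟨hdis, hne, hun⟩
        have hwσ : w ∉ σ := fun hc =>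
          (Finset.disjoint_left.1 hdis) hc (Finset.mem_insert_self w τ)
        refine ⟨hwσ, hne, ?_, ?_, ?_⟩
        · rw [Finset.disjoint_left]
          intro a ha hat
          rcases Finset.mem_insert.1 ha with rfl | ha'
          · exact hwτ hat
          · exact (Finset.disjoint_left.1 hdis) ha' (Finset.mem_insert_of_mem hat)
        · exact ⟨w, Finset.mem_insert_self w σ⟩
        · have : insert w σ ∪ τ = σ ∪ insert w τ := by
            rw [Finset.insert_eq, Finset.insert_eq, Finset.union_assoc]
            rw [Finset.union_left_comm]
          rwa [this]
      · rintro ⟨hwσ, hne, hdis, -, hun⟩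
        refine ⟨?_, hne, ?_⟩
        · rw [Finset.disjoint_left]
          intro a ha hat
          rcases Finset.mem_insert.1 hat with rfl | hat'
          · exact hwσ ha
          · exact (Finset.disjoint_left.1 hdis)
              (Finset.mem_insert_of_mem ha) hat'
        · have : insert w σ ∪ τ = σ ∪ insert w τ := by
            rw [Finset.insert_eq, Finset.insert_eq, Finset.union_assoc]
            rw [Finset.union_left_comm]
          rwa [← this]
    have hcol1 : Collapses X (delF X (insert w τ)) :=
      ihlink X (insert w τ) hins hlinkeq1
    -- second collapse: in `delF X (insert w τ)`, remove faces containing `τ`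
    have hτ1 : τ ∈ (delF X (insert w τ)).faces :=
      ⟨hτ, fun hc => hwτ (hc (Finset.mem_insert_self w τ))⟩
    have hlinkeq2 : linkF (delF X (insert w τ)) τ = L.del w := by
      apply ext'
      ext σ
      simp only [linkF, delF, del, Set.mem_setOf_eq, Set.mem_sep_iff, ← heq]
      constructor
      · rintro ⟨hdis, hne, hun, hnsub⟩
        refine ⟨⟨hdis, hne, hun⟩, fun hwσ => hnsub ?_⟩
        intro a ha
        rcases Finset.mem_insert.1 ha with rfl | ha'
        · exact Finset.mem_union_left τ hwσ
        · exact Finset.mem_union_right σ ha'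
      · rintro ⟨⟨hdis, hne, hun⟩, hwσ⟩
        refine ⟨hdis, hne, hun, fun hsub => ?_⟩
        have := hsub (Finset.mem_insert_self w τ)
        rcases Finset.mem_union.1 this with h | h
        · exact hwσ h
        · exact hwτ h
    have hcol2 : Collapses (delF X (insert w τ)) (delF (delF X (insert w τ)) τ) :=
      ihdel (delF X (insert w τ)) τ hτ1 hlinkeq2
    have hfinal : delF (delF X (insert w τ)) τ = delF X τ := by
      apply ext'
      ext σ
      simp only [delF, Set.mem_sep_iff, Set.mem_setOf_eq]
      constructor
      · rintro ⟨⟨hσ, -⟩, hn⟩; exact ⟨hσ, hn⟩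
      · rintro ⟨hσ, hn⟩
        exact ⟨⟨hσ, fun hc => hn ((Finset.subset_insert w τ).trans hc)⟩, hn⟩
    rw [hfinal] at hcol2
    exact hcol1.trans' hcol2

end SComplex

/-- If a finite simplicial complex `X` NE-reduces to a subcomplex `Y`, then `X`
collapses onto `Y`. -/
theorem collapses_of_nered {V : Type*} [DecidableEq V] (X Y : SComplex V)
    (hfin : X.faces.Finite) (h : SComplex.NERed X Y) :
    SComplex.Collapses X Y := by
  clear hfin
  induction h with
  | refl X => exact SComplex.Collapses.refl X
  | step X Y v hv hlink hred ih =>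
    have hlinkeq : SComplex.linkF X {v} = X.link v := by
      apply SComplex.ext'
      ext σ
      simp only [SComplex.linkF, SComplex.link, Set.mem_setOf_eq,
        Finset.disjoint_singleton_right, Finset.insert_eq, Finset.union_comm σ {v}]
    have hcol : SComplex.Collapses X (SComplex.delF X {v}) :=
      SComplex.key hlink X {v} hv hlinkeq
    have hdeleq : SComplex.delF X {v} = X.del v := by
      apply SComplex.ext'
      ext σ
      simp [SComplex.delF, SComplex.del, Finset.singleton_subset_iff]
    rw [hdeleq] at hcol
    exact hcol.trans' ih
end

section
/- Let P be a finite poset, φ : P → P a monotone map, and x ∈ P with φ(x) < x. Then the order complex Δ(P_{<x}) of the open lower interval below x is nonevasive. -/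
theorem SComplex.ext_faces {V : Type*} {X Y : SComplex V} (h : X.faces = Y.faces) :
    X = Y := by
  cases X; cases Y; cases h; rfl

section Aux

variable {P : Type*} [PartialOrder P]

lemma singleton_mem_oc {S : Set P} {m : P} (hm : m ∈ S) :
    ({m} : Finset P) ∈ (orderComplexOn P S).faces :=
  ⟨Finset.singleton_nonempty m, by simpa using hm, by simp⟩

lemma del_oc (S : Set P) (m : P) :
    (orderComplexOn P S).del m = orderComplexOn P (S \ {m}) := by
  apply SComplex.ext_faces
  ext σ
  simp only [SComplex.del, orderComplexOn, Set.mem_setOf_eq, Set.mem_diff,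
    Set.mem_singleton_iff]
  constructor
  · rintro ⟨⟨hne, hS, hch⟩, hm⟩
    exact ⟨hne, fun y hy => ⟨hS y hy, fun h => hm (h ▸ hy)⟩, hch⟩
  · rintro ⟨hne, hS, hch⟩
    exact ⟨⟨hne, fun y hy => (hS y hy).1, hch⟩, fun hm => (hS m hm).2 rfl⟩

lemma link_oc [DecidableEq P] (S : Set P) (m : P) (hm : m ∈ S) :
    (orderComplexOn P S).link m =
      orderComplexOn P {y ∈ S | y ≠ m ∧ (y ≤ m ∨ m ≤ y)} := by
  apply SComplex.ext_faces
  ext σ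
  simp only [SComplex.link, orderComplexOn, Set.mem_setOf_eq]
  constructor
  · rintro ⟨hmσ, hne, -, hS, hch⟩
    refine ⟨hne, fun y hy => ⟨hS y (Finset.mem_insert_of_mem hy),
      fun h => hmσ (h ▸ hy), ?_⟩,
      fun a ha b hb => hch a (Finset.mem_insert_of_mem ha) b (Finset.mem_insert_of_mem hb)⟩
    exact hch y (Finset.mem_insert_of_mem hy) m (Finset.mem_insert_self m σ)
  · rintro ⟨hne, hS, hch⟩
    have hmσ : m ∉ σ := fun h => (hS m h).2.1 rfl
    refine ⟨hmσ, hne, ⟨m, Finset.mem_insert_self m σ⟩, ?_, ?_⟩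
    · intro y hy
      rcases Finset.mem_insert.1 hy with rfl | hy
      · exact hm
      · exact (hS y hy).1
    · intro u hu v hv
      rcases Finset.mem_insert.1 hu with hum | hu'
      · rcases Finset.mem_insert.1 hv with hvm | hv'
        · exact Or.inl (hum ▸ hvm ▸ le_rfl)
        · exact hum ▸ ((hS v hv').2.2).symm
      · rcases Finset.mem_insert.1 hv with hvm | hv'
        · exact hvm ▸ (hS u hu').2.2
        · exact hch u hu' v hv'

lemma oc_singleton_faces (a : P) :
    (orderComplexOn P (↑({a} : Finset P) : Set P)).faces = {({a} : Finset P)} := by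
  ext σ
  simp only [orderComplexOn, Set.mem_setOf_eq, Finset.coe_singleton,
    Set.mem_singleton_iff]
  constructor
  · rintro ⟨⟨y, hy⟩, hS, -⟩
    refine Finset.eq_singleton_iff_unique_mem.2 ⟨?_, fun z hz => hS z hz⟩
    have := hS y hy
    subst this; exact hy
  · rintro rfl
    exact ⟨Finset.singleton_nonempty a, fun z hz => Finset.mem_singleton.1 hz, by simp⟩

lemma cone_nonevasive [DecidableEq P] :
    ∀ (n : ℕ) (Q : Finset P) (a : P), Q.card ≤ n → a ∈ Q → (∀ y ∈ Q, y ≤ a) →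
      SComplex.Nonevasive (orderComplexOn P ↑Q) := by
  intro n
  induction n with
  | zero =>
    intro Q a hc ha _
    rw [Nat.le_zero, Finset.card_eq_zero] at hc
    subst hc; simp at ha
  | succ n ih =>
    intro Q a hc ha hmax
    classical
    rcases (Q.erase a).eq_empty_or_nonempty with he | hne
    · have hQ : Q = {a} := by
        apply Finset.eq_singleton_iff_unique_mem.2
        refine ⟨ha, fun z hz => ?_⟩
        by_contra hz'
        exact Finset.notMem_empty z (he ▸ Finset.mem_erase.2 ⟨hz', hz⟩)
      subst hQ
      exact SComplex.Nonevasive.point _ a (oc_singleton_faces a)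
    · obtain ⟨m, hm, hmmax⟩ : ∃ m ∈ Q.erase a, ∀ z ∈ Q.erase a, ¬ m < z := by
        obtain ⟨i, hi⟩ := Finset.exists_maximal hne
        exact ⟨i, hi.1, fun z hz hlt => lt_irrefl _ (lt_of_lt_of_le hlt (hi.2 hz hlt.le))⟩
      have hmQ : m ∈ Q := Finset.mem_erase.1 hm |>.2
      have hma : m ≠ a := Finset.mem_erase.1 hm |>.1
      have hmlea : m < a := lt_of_le_of_ne (hmax m hmQ) hma
      refine SComplex.Nonevasive.step _ m (singleton_mem_oc (by exact_mod_cast hmQ)) ?_ ?_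
      · rw [del_oc, ← Finset.coe_erase]
        apply ih (Q.erase m) a
        · have := Finset.card_erase_of_mem hmQ; omega
        · exact Finset.mem_erase.2 ⟨hma.symm, ha⟩
        · exact fun y hy => hmax y (Finset.mem_erase.1 hy).2
      · rw [link_oc _ m (by exact_mod_cast hmQ)]
        have hset : {y ∈ (↑Q : Set P) | y ≠ m ∧ (y ≤ m ∨ m ≤ y)} =
            ↑(insert a (Q.filter (fun y => y < m))) := by
          ext y
          simp only [Set.mem_setOf_eq, Finset.coe_insert, Set.mem_insert_iff,
            Finset.coe_filter, Finset.mem_coe, Finset.mem_filter]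
          constructor
          · rintro ⟨hyQ, hym, hcomp⟩
            rcases hcomp with hle | hge
            · exact Or.inr ⟨hyQ, lt_of_le_of_ne hle hym⟩
            · left
              by_contra hya
              exact hmmax y (Finset.mem_erase.2 ⟨hya, hyQ⟩) (lt_of_le_of_ne hge (Ne.symm hym))
          · rintro (rfl | ⟨hyQ, hym⟩)
            · exact ⟨ha, hma.symm, Or.inr hmlea.le⟩
            · exact ⟨hyQ, ne_of_lt hym, Or.inl hym.le⟩
        rw [hset]
        apply ih (insert a (Q.filter (fun y => y < m))) a
        · have hsub : insert a (Q.filter (fun y => y < m)) ⊆ Q.erase m := by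
            intro z hz
            rcases Finset.mem_insert.1 hz with rfl | hz
            · exact Finset.mem_erase.2 ⟨hma.symm, ha⟩
            · obtain ⟨hzQ, hzm⟩ := Finset.mem_filter.1 hz
              exact Finset.mem_erase.2 ⟨ne_of_lt hzm, hzQ⟩
          have h1 := Finset.card_le_card hsub
          have h2 := Finset.card_erase_of_mem hmQ
          omega
        · exact Finset.mem_insert_self a _
        · intro y hy
          rcases Finset.mem_insert.1 hy with rfl | hy
          · exact le_rfl
          · exact le_trans (Finset.mem_filter.1 hy).2.le hmlea.le

lemma main_aux [DecidableEq P] (φ : P → P) (hmono : Monotone φ)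
    (hcomp : ∀ y : P, y ≤ φ y ∨ φ y ≤ y) :
    ∀ (n : ℕ) (Q : Finset P) (a : P), Q.card ≤ n → a ∈ Q →
      (∀ y ∈ Q, φ y ∈ Q) → (∀ y ∈ Q, φ y ≤ a) →
      SComplex.Nonevasive (orderComplexOn P ↑Q) := by
  intro n
  induction n with
  | zero =>
    intro Q a hc ha _ _
    rw [Nat.le_zero, Finset.card_eq_zero] at hc
    subst hc; simp at ha
  | succ n ih =>
    intro Q a hc ha hφQ hφa
    classical
    by_cases hall : ∀ y ∈ Q, y ≤ a
    · exact cone_nonevasive Q.card Q a le_rfl ha hall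
    · push_neg at hall
      obtain ⟨y0, hy0Q, hy0⟩ := hall
      obtain ⟨m, hm, hmmax⟩ : ∃ m ∈ Q.filter (fun z => y0 ≤ z),
          ∀ z ∈ Q.filter (fun z => y0 ≤ z), ¬ m < z := by
        obtain ⟨i, hi⟩ := Finset.exists_maximal (s := Q.filter (fun z => y0 ≤ z))
          ⟨y0, Finset.mem_filter.2 ⟨hy0Q, le_rfl⟩⟩
        exact ⟨i, hi.1, fun z hz hlt => lt_irrefl _ (lt_of_lt_of_le hlt (hi.2 hz hlt.le))⟩
      have hmQ : m ∈ Q := (Finset.mem_filter.1 hm).1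
      have hy0m : y0 ≤ m := (Finset.mem_filter.1 hm).2
      have hmax' : ∀ z ∈ Q, m ≤ z → z = m := by
        intro z hz hmz
        rcases eq_or_lt_of_le hmz with h | h
        · exact h.symm
        · exact absurd h (hmmax z (Finset.mem_filter.2 ⟨hz, le_trans hy0m hmz⟩))
      have hma : ¬ m ≤ a := fun h => hy0 (hy0m.trans h)
      have hφm : φ m < m := by
        rcases hcomp m with h | h
        · exact absurd (h.trans (hφa m hmQ)) hma
        · rcases lt_or_eq_of_le h with h' | h'
          · exact h'
          · exact absurd (h' ▸ hφa m hmQ) hma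
      refine SComplex.Nonevasive.step _ m (singleton_mem_oc (by exact_mod_cast hmQ)) ?_ ?_
      · rw [del_oc, ← Finset.coe_erase]
        apply ih (Q.erase m) a
        · have := Finset.card_erase_of_mem hmQ; omega
        · exact Finset.mem_erase.2 ⟨fun h => hma (h ▸ le_rfl), ha⟩
        · intro y hy
          obtain ⟨hym, hyQ⟩ := Finset.mem_erase.1 hy
          refine Finset.mem_erase.2 ⟨fun h => hma (h ▸ hφa y hyQ), hφQ y hyQ⟩
        · exact fun y hy => hφa y (Finset.mem_erase.1 hy).2
      · rw [link_oc _ m (by exact_mod_cast hmQ)]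
        have hset : {y ∈ (↑Q : Set P) | y ≠ m ∧ (y ≤ m ∨ m ≤ y)} =
            ↑(Q.filter (fun y => y < m)) := by
          ext y
          simp only [Set.mem_setOf_eq, Finset.coe_filter, Finset.mem_coe,
            Finset.mem_filter]
          constructor
          · rintro ⟨hyQ, hym, hc'⟩
            rcases hc' with hle | hge
            · exact ⟨hyQ, lt_of_le_of_ne hle hym⟩
            · exact absurd (hmax' y hyQ hge) hym
          · rintro ⟨hyQ, hym⟩
            exact ⟨hyQ, ne_of_lt hym, Or.inl hym.le⟩
        rw [hset]
        apply ih (Q.filter (fun y => y < m)) (φ m)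
        · have hsub : Q.filter (fun y => y < m) ⊆ Q.erase m := by
            intro z hz
            obtain ⟨hzQ, hzm⟩ := Finset.mem_filter.1 hz
            exact Finset.mem_erase.2 ⟨ne_of_lt hzm, hzQ⟩
          have h1 := Finset.card_le_card hsub
          have h2 := Finset.card_erase_of_mem hmQ
          omega
        · exact Finset.mem_filter.2 ⟨hφQ m hmQ, hφm⟩
        · intro y hy
          obtain ⟨hyQ, hym⟩ := Finset.mem_filter.1 hy
          exact Finset.mem_filter.2 ⟨hφQ y hyQ, lt_of_le_of_lt (hmono hym.le) hφm⟩
        · intro y hy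
          exact hmono (Finset.mem_filter.1 hy).2.le

end Aux

/-- For a finite poset `P`, a monotone map `φ : P → P`, and `x` with `φ x < x`,
the order complex of the open lower interval `P_{<x}` is nonevasive. -/
theorem nonevasive_orderComplex_below {P : Type*} [Fintype P] [DecidableEq P]
    [PartialOrder P] (φ : P → P) (h : IsMonotonePosetMap φ) (x : P)
    (hx : φ x < x) :
    SComplex.Nonevasive (orderComplexOn P {y : P | y < x}) := by
  classical
  obtain ⟨hmono, hcomp⟩ := h
  have hset : {y : P | y < x} = ↑(Finset.univ.filter (fun y => y < x)) := by
    ext y; simp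
  rw [hset]
  refine main_aux φ hmono hcomp _ _ (φ x) le_rfl ?_ ?_ ?_
  · simp [hx]
  · intro y hy
    simp only [Finset.mem_filter, Finset.mem_univ, true_and] at hy ⊢
    exact lt_of_le_of_lt (hmono hy.le) hx
  · intro y hy
    simp only [Finset.mem_filter, Finset.mem_univ, true_and] at hy
    exact hmono hy.le
end
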